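/- Fix an integer n ≥ 2, w̄ > 0, φ ≠ 0 satisfying Assumption 1, κ > 0, ĝ ∈ 𝒢ₙ and â ∈ ℝⁿ. Define V*_single(ĝ, â, C) = sup { aᵀ (I − φĝ)⁻² a : a ∈ ℝⁿ, ‖a − â‖² ≤ C } and V*_joint(ĝ, â, C) = sup { aᵀ (I − φg)⁻² a : a ∈ ℝⁿ, g ∈ 𝒢ₙ, κ‖g − ĝ‖_F² + ‖a − â‖² ≤ C }. Then: (i) V*_joint(ĝ, â, C) ≥ V*_single(ĝ, â, C) for every C ≥ 0; (ii) if φ > 0, then lim_{C→∞} V*_joint(ĝ, â, C)/V*_single(ĝ, â, C) = ((1 − φλ₁(ĝ))/(1 − (n−1)φw̄))², where λ₁(ĝ) is the largest eigenvalue of ĝ; and (iii) if φ < 0, then lim_{C→∞} V*_joint(ĝ, â, C)/V*_single(ĝ, â, C) = ((1 − φλ_n(ĝ))/(1 + φw̄√(⌊n/2⌋⌈n/2⌉)))², where λ_n(ĝ) is the smallest eigenvalue of ĝ. -/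

import Mathlib

open Matrix

/-- `μ` is a (real) eigenvalue of the matrix `M`. -/
def hasEigen {n : ℕ} (M : Matrix (Fin n) (Fin n) ℝ) (μ : ℝ) : Prop :=
  ∃ v : Fin n → ℝ, v ≠ 0 ∧ M.mulVec v = μ • v

/-- The set `𝒢ₙ` of symmetric `n×n` networks with zero diagonal and weights in `[0, w̄]`. -/
def Gset (n : ℕ) (w : ℝ) : Set (Matrix (Fin n) (Fin n) ℝ) :=
  {g | g.IsSymm ∧ (∀ i, g i i = 0) ∧ ∀ i j, 0 ≤ g i j ∧ g i j ≤ w}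

open Finset Filter Topology Pointwise

/-!
Write `S_g = 1 - φ g`. If `S_g` is symmetric with `c ‖v‖² ≤ vᵀ S_g v`, then
`aᵀ S_g⁻² a = ‖S_g⁻¹ a‖² ≤ ‖a‖² / c²`, with equality along an eigenvector of `S_g` for `c`.
On the budget set `‖a‖ ≤ √C + ‖â‖`, and taking `a` along that eigenvector, after paying the
network cost of the extremal `g`, comes within a constant of `√C`. So each value is
`C / c² + O(√C)`, where `c` is the least eigenvalue of `S_g` over the admissible networks.
For the single intervention `c = 1 - φ λ₁(ĝ)` (`φ > 0`) or `1 - φ λₙ(ĝ)` (`φ < 0`). For the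
joint one `c = 1 - β`, with `β` the largest eigenvalue of `φ g` over `𝒢ₙ`: for `φ > 0` the row
sums give `vᵀ g v ≤ (n-1) w̄ ‖v‖²`, attained by the complete graph; for `φ < 0`, splitting `v`
into its positive and negative parts, supported on `p + q ≤ n` vertices, gives
`-vᵀ g v ≤ w̄ √(p q) ‖v‖² ≤ w̄ √(⌊n/2⌋⌈n/2⌉) ‖v‖²`, attained by a balanced complete bipartite
graph.
-/

section InverseSquareForm

variable {ι : Type*} [Fintype ι]

lemma dotProduct_self_eq_norm_sq (v : ι → ℝ) : v ⬝ᵥ v = ‖WithLp.toLp 2 v‖ ^ 2 := by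
  rw [EuclideanSpace.real_norm_sq_eq]
  simp [dotProduct, sq]

lemma sum_sq_sub_eq_norm_sq (a b : ι → ℝ) :
    ∑ i, (a i - b i) ^ 2 = ‖WithLp.toLp 2 a - WithLp.toLp 2 b‖ ^ 2 := by
  rw [← WithLp.toLp_sub, EuclideanSpace.real_norm_sq_eq]
  rfl

lemma mul_norm_le_norm_mulVec {S : Matrix ι ι ℝ} {c : ℝ}
    (hS : ∀ v, c * (v ⬝ᵥ v) ≤ v ⬝ᵥ (S *ᵥ v)) (v : ι → ℝ) :
    c * ‖WithLp.toLp 2 v‖ ≤ ‖WithLp.toLp 2 (S *ᵥ v)‖ := by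
  rcases (norm_nonneg (WithLp.toLp 2 v)).eq_or_lt with hv | hv
  · rw [← hv, mul_zero]
    exact norm_nonneg _
  refine le_of_mul_le_mul_right ?_ hv
  calc c * ‖WithLp.toLp 2 v‖ * ‖WithLp.toLp 2 v‖ = c * (v ⬝ᵥ v) := by
        rw [dotProduct_self_eq_norm_sq]; ring
    _ ≤ v ⬝ᵥ (S *ᵥ v) := hS v
    _ ≤ ‖WithLp.toLp 2 (S *ᵥ v)‖ * ‖WithLp.toLp 2 v‖ := by
        rw [mul_comm, ← star_trivial v, dotProduct_comm, ← EuclideanSpace.inner_toLp_toLp]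
        exact real_inner_le_norm _ _

variable [DecidableEq ι] {S : Matrix ι ι ℝ} {c : ℝ}

lemma coercive_one_sub {M : Matrix ι ι ℝ} {β : ℝ}
    (hM : ∀ v, v ⬝ᵥ (M *ᵥ v) ≤ β * (v ⬝ᵥ v)) (v : ι → ℝ) :
    (1 - β) * (v ⬝ᵥ v) ≤ v ⬝ᵥ ((1 - M) *ᵥ v) := by
  rw [sub_mulVec, one_mulVec, dotProduct_sub]
  linarith [hM v]

lemma dotProduct_inv_sq_mulVec_eq_norm_sq (hsymm : S.IsSymm) (a : ι → ℝ) :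
    a ⬝ᵥ (S⁻¹ ^ 2 *ᵥ a) = ‖WithLp.toLp 2 (S⁻¹ *ᵥ a)‖ ^ 2 := by
  rw [← dotProduct_self_eq_norm_sq, sq, ← mulVec_mulVec, dotProduct_mulVec, ← vecMul_transpose,
    hsymm.inv.eq]

variable (hc : 0 < c) (hS : ∀ v, c * (v ⬝ᵥ v) ≤ v ⬝ᵥ (S *ᵥ v))
include hc hS

lemma isUnit_of_coercive : IsUnit S := by
  rw [← mulVec_injective_iff_isUnit]
  intro x y hxy
  have h := mul_norm_le_norm_mulVec hS (x - y)
  rw [mulVec_sub, hxy, sub_self, WithLp.toLp_zero, norm_zero] at h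
  have : ‖WithLp.toLp 2 (x - y)‖ = 0 :=
    le_antisymm (nonpos_of_mul_nonpos_right h hc) (norm_nonneg _)
  simpa [sub_eq_zero] using this

lemma mul_inv_of_coercive : S * S⁻¹ = 1 :=
  mul_nonsing_inv S ((isUnit_iff_isUnit_det S).mp (isUnit_of_coercive hc hS))

lemma inv_mul_of_coercive : S⁻¹ * S = 1 :=
  nonsing_inv_mul S ((isUnit_iff_isUnit_det S).mp (isUnit_of_coercive hc hS))

lemma dotProduct_inv_sq_mulVec_le (hsymm : S.IsSymm) (a : ι → ℝ) :
    a ⬝ᵥ (S⁻¹ ^ 2 *ᵥ a) ≤ ‖WithLp.toLp 2 a‖ ^ 2 / c ^ 2 := by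
  have h := mul_norm_le_norm_mulVec hS (S⁻¹ *ᵥ a)
  rw [mulVec_mulVec, mul_inv_of_coercive hc hS, one_mulVec] at h
  rw [dotProduct_inv_sq_mulVec_eq_norm_sq hsymm, le_div_iff₀ (by positivity), ← mul_pow,
    mul_comm]
  exact pow_le_pow_left₀ (by positivity) h 2

lemma dotProduct_inv_sq_mulVec_smul_eigenvector (hsymm : S.IsSymm) {u : ι → ℝ}
    (hu : ‖WithLp.toLp 2 u‖ = 1) (hSu : S *ᵥ u = c • u) (t : ℝ) :
    (t • u) ⬝ᵥ (S⁻¹ ^ 2 *ᵥ (t • u)) = t ^ 2 / c ^ 2 := by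
  have hinv : S⁻¹ *ᵥ u = c⁻¹ • u := by
    have h := congrArg (S⁻¹ *ᵥ ·) hSu
    simp only [mulVec_mulVec, inv_mul_of_coercive hc hS, one_mulVec, mulVec_smul] at h
    conv_rhs => rw [h]
    rw [smul_smul, inv_mul_cancel₀ hc.ne', one_smul]
  rw [dotProduct_inv_sq_mulVec_eq_norm_sq hsymm, mulVec_smul, hinv, smul_smul, WithLp.toLp_smul,
    norm_smul, hu, mul_one, Real.norm_eq_abs, sq_abs, div_eq_mul_inv, mul_pow, inv_pow]

end InverseSquareForm

section Eigenvalues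

variable {n : ℕ} {M : Matrix (Fin n) (Fin n) ℝ} {μ β : ℝ}

lemma hasEigen.smul (h : hasEigen M μ) (φ : ℝ) : hasEigen (φ • M) (φ * μ) := by
  obtain ⟨u, hu, hMu⟩ := h
  exact ⟨u, hu, by rw [smul_mulVec, hMu, smul_smul]⟩

lemma hasEigen.of_smul {φ : ℝ} (hφ : φ ≠ 0) (h : hasEigen (φ • M) μ) :
    hasEigen M (μ / φ) := by
  obtain ⟨u, hu, hMu⟩ := h
  refine ⟨u, hu, ?_⟩
  rw [smul_mulVec, ← eq_inv_smul_iff₀ hφ] at hMu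
  rw [hMu, smul_smul, inv_mul_eq_div]

lemma hasEigen.exists_unit (h : hasEigen M μ) :
    ∃ u : Fin n → ℝ, ‖WithLp.toLp 2 u‖ = 1 ∧ M *ᵥ u = μ • u := by
  obtain ⟨u, hu, hMu⟩ := h
  have hu' : ‖WithLp.toLp 2 u‖ ≠ 0 := by simpa using hu
  refine ⟨‖WithLp.toLp 2 u‖⁻¹ • u, ?_, by rw [mulVec_smul, hMu, smul_comm]⟩
  rw [WithLp.toLp_smul, norm_smul, norm_inv, norm_norm, inv_mul_cancel₀ hu']

lemma hasEigen.le_of_forall_dotProduct_mulVec_le (h : hasEigen M μ)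
    (hM : ∀ v, v ⬝ᵥ (M *ᵥ v) ≤ β * (v ⬝ᵥ v)) : μ ≤ β := by
  obtain ⟨u, hu, hMu⟩ := h
  have hpos : 0 < u ⬝ᵥ u := by
    rw [dotProduct_self_eq_norm_sq]
    exact pow_pos (norm_pos_iff.2 (by simpa using hu)) 2
  have := hM u
  rw [hMu, dotProduct_smul, smul_eq_mul] at this
  exact le_of_mul_le_mul_right this hpos

lemma dotProduct_mulVec_le_of_forall_hasEigen_le (hM : M.IsSymm)
    (h : ∀ μ, hasEigen M μ → μ ≤ β) (v : Fin n → ℝ) : v ⬝ᵥ (M *ᵥ v) ≤ β * (v ⬝ᵥ v) := by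
  have hH : M.IsHermitian := isHermitian_iff_isSymm.2 hM
  have hpsd : (algebraMap ℝ _ β - M).PosSemidef := by
    refine posSemidef_iff_isHermitian_and_spectrum_nonneg.2
      ⟨IsSelfAdjoint.sub (IsSelfAdjoint.algebraMap _ (.all β)) hH, ?_⟩
    rw [← spectrum.singleton_sub_eq, hH.spectrum_real_eq_range_eigenvalues]
    rintro _ ⟨_, rfl, _, ⟨i, rfl⟩, rfl⟩
    refine sub_nonneg.2 (h _ ⟨_, fun h0 => hH.eigenvectorBasis.orthonormal.ne_zero i ?_,
      hH.mulVec_eigenvectorBasis i⟩)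
    simpa using congrArg (WithLp.toLp 2) h0
  have := hpsd.dotProduct_mulVec_nonneg v
  rwa [star_trivial, sub_mulVec, dotProduct_sub, Algebra.algebraMap_eq_smul_one, smul_mulVec,
    one_mulVec, dotProduct_smul, smul_eq_mul, sub_nonneg] at this

def IsMaxEigenvalueOn (𝓜 : Set (Matrix (Fin n) (Fin n) ℝ)) (β : ℝ) : Prop :=
  (∀ M ∈ 𝓜, ∀ v, v ⬝ᵥ (M *ᵥ v) ≤ β * (v ⬝ᵥ v)) ∧ ∃ M ∈ 𝓜, hasEigen M β

lemma isMaxEigenvalueOn_smul_singleton {g : Matrix (Fin n) (Fin n) ℝ} {φ lam : ℝ}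
    (hg : g.IsSymm) (hφ : φ ≠ 0) (hlam : hasEigen g lam)
    (hmax : ∀ μ, hasEigen g μ → φ * μ ≤ φ * lam) :
    IsMaxEigenvalueOn (φ • {g}) (φ * lam) := by
  rw [Set.smul_set_singleton]
  refine ⟨?_, _, rfl, hlam.smul φ⟩
  rintro _ rfl
  refine dotProduct_mulVec_le_of_forall_hasEigen_le (hg.smul φ) fun μ hμ => ?_
  simpa [mul_div_cancel₀ _ hφ] using hmax _ (hμ.of_smul hφ)

end Eigenvalues

lemma tendsto_sqrt_add_sq_div_self (A : ℝ) :
    Tendsto (fun C : ℝ => (√C + A) ^ 2 / C) atTop (𝓝 1) := by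
  have h : Tendsto (fun C : ℝ => (1 + A / √C) ^ 2) atTop (𝓝 ((1 + 0) ^ 2)) :=
    ((tendsto_const_nhds.div_atTop Real.tendsto_sqrt_atTop).const_add 1).pow 2
  rw [add_zero, one_pow] at h
  refine h.congr' ?_
  filter_upwards [eventually_gt_atTop 0] with C hC
  have hs : 0 < √C := Real.sqrt_pos.2 hC
  field_simp
  rw [Real.sq_sqrt hC.le, mul_comm]

lemma tendsto_div_self_of_sqrt_bounds {f : ℝ → ℝ} {k A B : ℝ}
    (hlo : ∀ᶠ C in atTop, (√C - B) ^ 2 * k ≤ f C)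
    (hhi : ∀ᶠ C in atTop, f C ≤ (√C + A) ^ 2 * k) :
    Tendsto (fun C => f C / C) atTop (𝓝 k) := by
  have hlo' := (tendsto_sqrt_add_sq_div_self (-B)).mul_const k
  have hhi' := (tendsto_sqrt_add_sq_div_self A).mul_const k
  rw [one_mul] at hlo' hhi'
  refine tendsto_of_tendsto_of_tendsto_of_le_of_le' hlo' hhi' ?_ ?_
  · filter_upwards [hlo, eventually_gt_atTop 0] with C h hC
    rw [← sub_eq_add_neg, div_mul_eq_mul_div]
    gcongr
  · filter_upwards [hhi, eventually_gt_atTop 0] with C h hC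
    rw [div_mul_eq_mul_div]
    gcongr

section InterventionValue

variable {n : ℕ}

def jointValueSet (G : Set (Matrix (Fin n) (Fin n) ℝ)) (cost : Matrix (Fin n) (Fin n) ℝ → ℝ)
    (φ : ℝ) (ahat : Fin n → ℝ) (C : ℝ) : Set ℝ :=
  {v : ℝ | ∃ (a : Fin n → ℝ) (g : Matrix (Fin n) (Fin n) ℝ), g ∈ G ∧
    cost g + (∑ i, (a i - ahat i) ^ 2) ≤ C ∧ v = a ⬝ᵥ (((1 - φ • g)⁻¹ ^ 2).mulVec a)}

noncomputable def jointValue (G : Set (Matrix (Fin n) (Fin n) ℝ))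
    (cost : Matrix (Fin n) (Fin n) ℝ → ℝ) (φ : ℝ) (ahat : Fin n → ℝ) (C : ℝ) : ℝ :=
  sSup (jointValueSet G cost φ ahat C)

noncomputable def singleValue (g : Matrix (Fin n) (Fin n) ℝ) (φ : ℝ) (ahat : Fin n → ℝ)
    (C : ℝ) : ℝ :=
  sSup {v : ℝ | ∃ a : Fin n → ℝ, (∑ i, (a i - ahat i) ^ 2) ≤ C ∧
    v = a ⬝ᵥ (((1 - φ • g)⁻¹ ^ 2).mulVec a)}

lemma singleValue_eq_jointValue_singleton (g : Matrix (Fin n) (Fin n) ℝ) (φ : ℝ)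
    (ahat : Fin n → ℝ) (C : ℝ) : singleValue g φ ahat C = jointValue {g} 0 φ ahat C := by
  simp [singleValue, jointValue, jointValueSet]

variable {G : Set (Matrix (Fin n) (Fin n) ℝ)} {cost : Matrix (Fin n) (Fin n) ℝ → ℝ} {φ β : ℝ}
  {ahat : Fin n → ℝ} {C : ℝ}

lemma norm_le_sqrt_add_norm {a : Fin n → ℝ} (h : ∑ i, (a i - ahat i) ^ 2 ≤ C) :
    ‖WithLp.toLp 2 a‖ ≤ √C + ‖WithLp.toLp 2 ahat‖ := by
  rw [sum_sq_sub_eq_norm_sq] at h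
  have := Real.abs_le_sqrt h
  rw [abs_norm] at this
  linarith [norm_le_insert' (WithLp.toLp 2 a) (WithLp.toLp 2 ahat)]

lemma coercive_one_sub_smul_of_mem (hβ : IsMaxEigenvalueOn (φ • G) β)
    {g : Matrix (Fin n) (Fin n) ℝ} (hg : g ∈ G) (v : Fin n → ℝ) :
    (1 - β) * (v ⬝ᵥ v) ≤ v ⬝ᵥ ((1 - φ • g) *ᵥ v) :=
  coercive_one_sub (hβ.1 _ (Set.smul_mem_smul_set hg)) v

variable (hsymm : ∀ g ∈ G, g.IsSymm) (hβ1 : β < 1) (hβ : IsMaxEigenvalueOn (φ • G) β)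
include hsymm hβ1 hβ

lemma le_of_mem_jointValueSet (hcost : ∀ g ∈ G, 0 ≤ cost g) {x : ℝ}
    (hx : x ∈ jointValueSet G cost φ ahat C) :
    x ≤ (√C + ‖WithLp.toLp 2 ahat‖) ^ 2 / (1 - β) ^ 2 := by
  obtain ⟨a, g, hg, hC, rfl⟩ := hx
  have ha := norm_le_sqrt_add_norm (show ∑ i, (a i - ahat i) ^ 2 ≤ C by linarith [hcost g hg])
  calc a ⬝ᵥ ((1 - φ • g)⁻¹ ^ 2 *ᵥ a) ≤ ‖WithLp.toLp 2 a‖ ^ 2 / (1 - β) ^ 2 :=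
        dotProduct_inv_sq_mulVec_le (sub_pos.2 hβ1) (coercive_one_sub_smul_of_mem hβ hg)
          (isSymm_one.sub ((hsymm g hg).smul φ)) a
    _ ≤ _ := by gcongr

lemma bddAbove_jointValueSet (hcost : ∀ g ∈ G, 0 ≤ cost g) :
    BddAbove (jointValueSet G cost φ ahat C) :=
  ⟨_, fun _ hx => le_of_mem_jointValueSet hsymm hβ1 hβ hcost hx⟩

lemma jointValue_le (hcost : ∀ g ∈ G, 0 ≤ cost g) :
    jointValue G cost φ ahat C ≤ (√C + ‖WithLp.toLp 2 ahat‖) ^ 2 / (1 - β) ^ 2 :=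
  Real.sSup_le (fun _ hx => le_of_mem_jointValueSet hsymm hβ1 hβ hcost hx) (by positivity)

lemma le_jointValue (hcost : ∀ g ∈ G, 0 ≤ cost g) {g₀ : Matrix (Fin n) (Fin n) ℝ}
    (hg₀ : g₀ ∈ G) (hβg₀ : hasEigen (φ • g₀) β)
    (hC : (‖WithLp.toLp 2 ahat‖ + √(cost g₀)) ^ 2 ≤ C) :
    (√C - (‖WithLp.toLp 2 ahat‖ + √(cost g₀))) ^ 2 / (1 - β) ^ 2 ≤
      jointValue G cost φ ahat C := by
  obtain ⟨u, hu, hMu⟩ := hβg₀.exists_unit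
  set A := ‖WithLp.toLp 2 ahat‖
  have hD := hcost g₀ hg₀
  have hC0 : 0 ≤ C := le_trans (sq_nonneg _) hC
  have hAD : A + √(cost g₀) ≤ √C := Real.le_sqrt_of_sq_le hC
  set t := √C - (A + √(cost g₀))
  have hS : (1 - φ • g₀) *ᵥ u = (1 - β) • u := by
    rw [sub_mulVec, one_mulVec, hMu, sub_smul, one_smul]
  refine le_csSup (bddAbove_jointValueSet hsymm hβ1 hβ hcost) ⟨t • u, g₀, hg₀, ?_,
    (dotProduct_inv_sq_mulVec_smul_eigenvector (sub_pos.2 hβ1)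
      (coercive_one_sub_smul_of_mem hβ hg₀) (isSymm_one.sub ((hsymm g₀ hg₀).smul φ)) hu hS t).symm⟩
  have hdist : ‖WithLp.toLp 2 (t • u) - WithLp.toLp 2 ahat‖ ≤ √C - √(cost g₀) := by
    calc _ ≤ ‖WithLp.toLp 2 (t • u)‖ + A := norm_sub_le _ _
      _ = √C - √(cost g₀) := by
        rw [WithLp.toLp_smul, norm_smul, hu, mul_one, Real.norm_of_nonneg (by linarith)]; ring
  rw [sum_sq_sub_eq_norm_sq]
  have := pow_le_pow_left₀ (norm_nonneg _) hdist 2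
  have hA : 0 ≤ A := norm_nonneg _
  nlinarith [Real.sq_sqrt hD, Real.sq_sqrt hC0,
    mul_nonneg (Real.sqrt_nonneg (cost g₀)) (show 0 ≤ √C - √(cost g₀) by linarith)]

theorem tendsto_jointValue_div_self (hcost : ∀ g ∈ G, 0 ≤ cost g) :
    Tendsto (fun C => jointValue G cost φ ahat C / C) atTop (𝓝 (1 / (1 - β) ^ 2)) := by
  obtain ⟨_, ⟨g₀, hg₀, rfl⟩, hβg₀⟩ := hβ.2
  refine tendsto_div_self_of_sqrt_bounds (A := ‖WithLp.toLp 2 ahat‖)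
    (B := ‖WithLp.toLp 2 ahat‖ + √(cost g₀)) ?_ (.of_forall fun C => ?_)
  · filter_upwards [eventually_ge_atTop ((‖WithLp.toLp 2 ahat‖ + √(cost g₀)) ^ 2)]
      with C hC
    rw [mul_one_div]
    exact le_jointValue hsymm hβ1 hβ hcost hg₀ hβg₀ hC
  · rw [mul_one_div]
    exact jointValue_le hsymm hβ1 hβ hcost

lemma singleValue_le_jointValue (hcost : ∀ g ∈ G, 0 ≤ cost g)
    {ghat : Matrix (Fin n) (Fin n) ℝ} (hghat : ghat ∈ G) (hcost₀ : cost ghat = 0) (hC : 0 ≤ C) :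
    singleValue ghat φ ahat C ≤ jointValue G cost φ ahat C := by
  refine csSup_le_csSup (bddAbove_jointValueSet hsymm hβ1 hβ hcost)
    ⟨_, ahat, by simpa using hC, rfl⟩ ?_
  rintro _ ⟨a, ha, rfl⟩
  exact ⟨a, ghat, hghat, by rwa [hcost₀, zero_add], rfl⟩

theorem tendsto_jointValue_div_singleValue (hcost : ∀ g ∈ G, 0 ≤ cost g)
    {ghat : Matrix (Fin n) (Fin n) ℝ} (hghat : ghat ∈ G) (hcost₀ : cost ghat = 0) {γ : ℝ}
    (hγ : IsMaxEigenvalueOn (φ • {ghat}) γ) :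
    (∀ C, 0 ≤ C → singleValue ghat φ ahat C ≤ jointValue G cost φ ahat C) ∧
    Tendsto (fun C => jointValue G cost φ ahat C / singleValue ghat φ ahat C) atTop
      (𝓝 (((1 - γ) / (1 - β)) ^ 2)) := by
  have hγβ : γ ≤ β := by
    obtain ⟨M, hM, hMγ⟩ := hγ.2
    exact hMγ.le_of_forall_dotProduct_mulVec_le
      (hβ.1 M (Set.smul_set_mono (Set.singleton_subset_iff.2 hghat) hM))
  have hγ1 : γ < 1 := hγβ.trans_lt hβ1
  refine ⟨fun C hC => singleValue_le_jointValue hsymm hβ1 hβ hcost hghat hcost₀ hC, ?_⟩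
  have hsingle :
      Tendsto (fun C => singleValue ghat φ ahat C / C) atTop (𝓝 (1 / (1 - γ) ^ 2)) := by
    simp_rw [singleValue_eq_jointValue_singleton]
    exact tendsto_jointValue_div_self
      (fun g hg => (Set.mem_singleton_iff.1 hg) ▸ hsymm ghat hghat) hγ1 hγ fun _ _ => le_rfl
  have hjoint := tendsto_jointValue_div_self hsymm hβ1 hβ hcost (ahat := ahat)
  have hβ0 : 1 - β ≠ 0 := (sub_pos.2 hβ1).ne'
  have hγ0 : 1 - γ ≠ 0 := (sub_pos.2 hγ1).ne'
  convert (hjoint.div hsingle (by positivity)).congr' ?_ using 2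
  · field_simp
  · filter_upwards [eventually_gt_atTop 0] with C hC
    exact div_div_div_cancel_right₀ hC.ne' _ _

end InterventionValue

section Networks

variable {n : ℕ} {w : ℝ} {g : Matrix (Fin n) (Fin n) ℝ}

lemma sum_row_le_of_mem_Gset (hg : g ∈ Gset n w) (i : Fin n) :
    ∑ j, g i j ≤ ((n : ℝ) - 1) * w := by
  rw [← add_sum_erase _ _ (mem_univ i), hg.2.1 i, zero_add]
  calc ∑ j ∈ univ.erase i, g i j ≤ ∑ j ∈ univ.erase i, w :=
        sum_le_sum fun j _ => (hg.2.2 i j).2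
    _ = ((n : ℝ) - 1) * w := by
      rw [sum_const, card_erase_of_mem (mem_univ i), card_univ, Fintype.card_fin, nsmul_eq_mul,
        Nat.cast_pred (Fin.pos i)]

lemma dotProduct_mulVec_eq_sum (g : Matrix (Fin n) (Fin n) ℝ) (v : Fin n → ℝ) :
    v ⬝ᵥ (g *ᵥ v) = ∑ i, ∑ j, g i j * (v i * v j) := by
  simp only [dotProduct, mulVec, mul_sum]
  exact sum_congr rfl fun i _ => sum_congr rfl fun j _ => by ring

lemma dotProduct_mulVec_le_of_mem_Gset (hg : g ∈ Gset n w) (v : Fin n → ℝ) :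
    v ⬝ᵥ (g *ᵥ v) ≤ ((n : ℝ) - 1) * w * (v ⬝ᵥ v) := by
  have hsymm : ∑ i, ∑ j, g i j * v j ^ 2 = ∑ i, ∑ j, g i j * v i ^ 2 := by
    rw [sum_comm]
    simp only [hg.1.apply]
  calc v ⬝ᵥ (g *ᵥ v) ≤ ∑ i, ∑ j, g i j * ((v i ^ 2 + v j ^ 2) / 2) := by
        rw [dotProduct_mulVec_eq_sum]
        exact sum_le_sum fun i _ => sum_le_sum fun j _ => mul_le_mul_of_nonneg_left
          (by nlinarith [sq_nonneg (v i - v j)]) (hg.2.2 i j).1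
    _ = (∑ i, ∑ j, g i j * v i ^ 2 + ∑ i, ∑ j, g i j * v j ^ 2) / 2 := by
        rw [← sum_add_distrib, sum_div]
        refine sum_congr rfl fun i _ => ?_
        rw [← sum_add_distrib, sum_div]
        exact sum_congr rfl fun j _ => by ring
    _ = ∑ i, v i ^ 2 * ∑ j, g i j := by
        rw [hsymm, add_self_div_two]
        exact sum_congr rfl fun i _ => by rw [mul_sum]; exact sum_congr rfl fun j _ => by ring
    _ ≤ ∑ i, v i ^ 2 * (((n : ℝ) - 1) * w) := by
        gcongr with i
        exact sum_row_le_of_mem_Gset hg i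
    _ = ((n : ℝ) - 1) * w * (v ⬝ᵥ v) := by
        rw [← sum_mul, mul_comm]
        simp [dotProduct, sq]

lemma neg_mul_le_posPart_mul_negPart_add (x y : ℝ) : -(x * y) ≤ x⁺ * y⁻ + x⁻ * y⁺ := by
  have h : x * y = (x⁺ - x⁻) * (y⁺ - y⁻) := by rw [posPart_sub_negPart, posPart_sub_negPart]
  rw [h]
  nlinarith [mul_nonneg (posPart_nonneg x) (posPart_nonneg y),
    mul_nonneg (negPart_nonneg x) (negPart_nonneg y)]

lemma neg_dotProduct_mulVec_le_of_mem_Gset (hg : g ∈ Gset n w) (v : Fin n → ℝ) :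
    -(v ⬝ᵥ (g *ᵥ v)) ≤ 2 * w * ((∑ i, (v i)⁺) * ∑ i, (v i)⁻) := by
  calc -(v ⬝ᵥ (g *ᵥ v)) = ∑ i, ∑ j, g i j * -(v i * v j) := by
        simp only [dotProduct_mulVec_eq_sum, mul_neg, sum_neg_distrib]
    _ ≤ ∑ i, ∑ j, w * ((v i)⁺ * (v j)⁻ + (v i)⁻ * (v j)⁺) := by
        refine sum_le_sum fun i _ => sum_le_sum fun j _ => ?_
        have hR : 0 ≤ (v i)⁺ * (v j)⁻ + (v i)⁻ * (v j)⁺ := by positivity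
        calc g i j * -(v i * v j) ≤ g i j * ((v i)⁺ * (v j)⁻ + (v i)⁻ * (v j)⁺) :=
              mul_le_mul_of_nonneg_left (neg_mul_le_posPart_mul_negPart_add _ _) (hg.2.2 i j).1
          _ ≤ _ := mul_le_mul_of_nonneg_right (hg.2.2 i j).2 hR
    _ = 2 * w * ((∑ i, (v i)⁺) * ∑ i, (v i)⁻) := by
        simp only [mul_add, sum_add_distrib, ← mul_sum, ← sum_mul]
        ring

lemma sq_sum_le_card_support_mul_sum_sq {ι : Type*} [Fintype ι] (f : ι → ℝ) :
    (∑ i, f i) ^ 2 ≤ #{i | f i ≠ 0} * ∑ i, f i ^ 2 := by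
  calc (∑ i, f i) ^ 2 = (∑ i with f i ≠ 0, f i) ^ 2 := by rw [sum_filter_ne_zero]
    _ ≤ #{i | f i ≠ 0} * ∑ i with f i ≠ 0, f i ^ 2 := sq_sum_le_card_mul_sum_sq
    _ = #{i | f i ≠ 0} * ∑ i, f i ^ 2 := by rw [sum_filter_of_ne fun i _ h => by simpa using h]

lemma card_posPart_ne_zero_add_card_negPart_ne_zero_le (v : Fin n → ℝ) :
    #{i | (v i)⁺ ≠ 0} + #{i | (v i)⁻ ≠ 0} ≤ n := by
  rw [← card_union_of_disjoint (disjoint_filter.2 fun i _ h₁ h₂ => ?_)]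
  · exact (card_le_univ _).trans (by simp)
  simp only [ne_eq, posPart_eq_zero, negPart_eq_zero, not_le] at h₁ h₂
  linarith

lemma mul_le_half_mul_half_succ {p q n : ℕ} (h : p + q ≤ n) :
    p * q ≤ n / 2 * ((n + 1) / 2) := by
  obtain ⟨m, rfl | rfl⟩ := Nat.even_or_odd' n
  · rw [show 2 * m / 2 = m by omega, show (2 * m + 1) / 2 = m by omega]
    zify at h ⊢
    nlinarith [sq_nonneg ((p : ℤ) - q)]
  · rw [show (2 * m + 1) / 2 = m by omega, show (2 * m + 1 + 1) / 2 = m + 1 by omega]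
    have : 4 * (p * q) ≤ 4 * (m * (m + 1)) + 1 := by
      zify at h ⊢
      nlinarith [sq_nonneg ((p : ℤ) - q)]
    omega

lemma two_mul_mul_le_of_sq_le {x y a b p q s : ℝ} (hx : x ^ 2 ≤ p * a) (hy : y ^ 2 ≤ q * b)
    (hpq : p * q ≤ s ^ 2) (ha : 0 ≤ a) (hb : 0 ≤ b) (hs : 0 ≤ s) :
    2 * (x * y) ≤ s * (a + b) := by
  refine (le_abs_self _).trans (abs_le_of_sq_le_sq ?_ (by positivity))
  calc (2 * (x * y)) ^ 2 = 4 * (x ^ 2 * y ^ 2) := by ring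
    _ ≤ 4 * ((p * a) * (q * b)) := mul_le_mul_of_nonneg_left
        (mul_le_mul hx hy (sq_nonneg y) ((sq_nonneg x).trans hx)) (by norm_num)
    _ = 4 * (p * q) * (a * b) := by ring
    _ ≤ 4 * s ^ 2 * (a * b) := by gcongr
    _ ≤ (s * (a + b)) ^ 2 := by nlinarith [mul_nonneg (sq_nonneg s) (sq_nonneg (a - b))]

lemma posPart_sq_add_negPart_sq (x : ℝ) : x⁺ ^ 2 + x⁻ ^ 2 = x ^ 2 := by
  rcases le_total 0 x with h | h
  · simp [posPart_eq_self.2 h, negPart_eq_zero.2 h]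
  · simp [posPart_eq_zero.2 h, negPart_eq_neg.2 h]

lemma neg_mul_dotProduct_self_le_of_mem_Gset (hg : g ∈ Gset n w) (hw : 0 ≤ w)
    (v : Fin n → ℝ) :
    -(w * √(((n / 2 : ℕ) : ℝ) * (((n + 1) / 2 : ℕ) : ℝ))) * (v ⬝ᵥ v) ≤ v ⬝ᵥ (g *ᵥ v) := by
  have hcard : (#{i | (v i)⁺ ≠ 0} : ℝ) * #{i | (v i)⁻ ≠ 0}
      ≤ √(((n / 2 : ℕ) : ℝ) * (((n + 1) / 2 : ℕ) : ℝ)) ^ 2 := by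
    rw [Real.sq_sqrt (by positivity)]
    exact_mod_cast mul_le_half_mul_half_succ (card_posPart_ne_zero_add_card_negPart_ne_zero_le v)
  have key := two_mul_mul_le_of_sq_le (sq_sum_le_card_support_mul_sum_sq _)
    (sq_sum_le_card_support_mul_sum_sq _) hcard (sum_nonneg fun i _ => sq_nonneg (v i)⁺)
    (sum_nonneg fun i _ => sq_nonneg (v i)⁻) (Real.sqrt_nonneg _)
  have hvv : v ⬝ᵥ v = ∑ i, (v i)⁺ ^ 2 + ∑ i, (v i)⁻ ^ 2 := by
    rw [← sum_add_distrib, sum_congr rfl fun i _ => posPart_sq_add_negPart_sq (v i)]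
    simp only [dotProduct, sq]
  rw [hvv]
  nlinarith [neg_dotProduct_mulVec_le_of_mem_Gset hg v, mul_le_mul_of_nonneg_left key hw]

end Networks

section ExtremalNetworks

open SimpleGraph

variable {n : ℕ} {w φ : ℝ}

def completeBipartiteOn {ι : Type*} (A : Finset ι) : SimpleGraph ι where
  Adj i j := (i ∈ A ↔ j ∉ A)

instance {ι : Type*} [DecidableEq ι] (A : Finset ι) :
    DecidableRel (completeBipartiteOn A).Adj :=
  fun i j => inferInstanceAs (Decidable (i ∈ A ↔ j ∉ A))

lemma smul_adjMatrix_mem_Gset (H : SimpleGraph (Fin n)) [DecidableRel H.Adj] (hw : 0 ≤ w) :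
    w • H.adjMatrix ℝ ∈ Gset n w := by
  refine ⟨H.isSymm_adjMatrix.smul w, fun i => by simp, fun i j => ?_⟩
  by_cases h : H.Adj i j <;> simp [h, hw]

lemma hasEigen_adjMatrix_top (hn : 0 < n) :
    hasEigen ((⊤ : SimpleGraph (Fin n)).adjMatrix ℝ) ((n : ℝ) - 1) := by
  refine ⟨Function.const _ 1, fun h => one_ne_zero (congrFun h ⟨0, hn⟩), ?_⟩
  ext i
  rw [Pi.smul_apply, adjMatrix_mulVec_const_apply_of_regular IsRegularOfDegree.top]
  simp [Nat.cast_pred hn]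

lemma hasEigen_adjMatrix_completeBipartiteOn {A : Finset (Fin n)} (hA : A.Nonempty)
    (hAc : Aᶜ.Nonempty) :
    hasEigen ((completeBipartiteOn A).adjMatrix ℝ) (-√((#A : ℝ) * #Aᶜ)) := by
  refine ⟨fun i => if i ∈ A then √(#Aᶜ : ℝ) else -√(#A : ℝ), fun h => ?_, ?_⟩
  · obtain ⟨i, hi⟩ := hA
    have := congrFun h i
    simp [hi] at this
    simp [this] at hAc
  · ext i
    have hterm : ∀ j, (if (completeBipartiteOn A).Adj i j then (1 : ℝ) else 0) *
        (if j ∈ A then √(#Aᶜ : ℝ) else -√(#A : ℝ)) =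
        if j ∈ A then (if i ∈ A then 0 else √(#Aᶜ : ℝ))
        else (if i ∈ A then -√(#A : ℝ) else 0) := by
      intro j
      by_cases hj : j ∈ A <;> by_cases hi : i ∈ A <;> simp [completeBipartiteOn, hi, hj]
    simp only [mulVec, dotProduct, adjMatrix_apply, hterm, ← sum_add_sum_compl A]
    rw [sum_congr rfl fun j hj => if_pos hj, sum_congr rfl fun j hj => if_neg (mem_compl.1 hj),
      sum_const, sum_const, nsmul_eq_mul, nsmul_eq_mul]
    by_cases hi : i ∈ A
    · simp only [hi, if_true, Pi.smul_apply, smul_eq_mul, Real.sqrt_mul (Nat.cast_nonneg _)]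
      linear_combination √(#A : ℝ) * Real.mul_self_sqrt (Nat.cast_nonneg (α := ℝ) #Aᶜ)
    · simp only [hi, if_false, Pi.smul_apply, smul_eq_mul, Real.sqrt_mul (Nat.cast_nonneg _)]
      linear_combination -√(#Aᶜ : ℝ) * Real.mul_self_sqrt (Nat.cast_nonneg (α := ℝ) #A)

lemma isMaxEigenvalueOn_smul_Gset_of_pos (hφ : 0 < φ) (hn : 0 < n) (hw : 0 ≤ w) :
    IsMaxEigenvalueOn (φ • Gset n w) (((n : ℝ) - 1) * φ * w) := by
  refine ⟨?_, _, Set.smul_mem_smul_set (smul_adjMatrix_mem_Gset ⊤ hw), ?_⟩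
  · rintro _ ⟨g, hg, rfl⟩ v
    rw [smul_mulVec, dotProduct_smul, smul_eq_mul]
    calc φ * (v ⬝ᵥ (g *ᵥ v)) ≤ φ * (((n : ℝ) - 1) * w * (v ⬝ᵥ v)) :=
          mul_le_mul_of_nonneg_left (dotProduct_mulVec_le_of_mem_Gset hg v) hφ.le
      _ = _ := by ring
  · convert ((hasEigen_adjMatrix_top hn).smul w).smul φ using 1
    ring

lemma isMaxEigenvalueOn_smul_Gset_of_neg (hφ : φ < 0) (hn : 2 ≤ n) (hw : 0 ≤ w) :
    IsMaxEigenvalueOn (φ • Gset n w)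
      (-(φ * w * √(((n / 2 : ℕ) : ℝ) * (((n + 1) / 2 : ℕ) : ℝ)))) := by
  obtain ⟨A, -, hA⟩ := exists_subset_card_eq (s := (univ : Finset (Fin n))) (n := n / 2)
    (by simp only [card_univ, Fintype.card_fin]; omega)
  have hAc : #Aᶜ = (n + 1) / 2 := by rw [card_compl, Fintype.card_fin, hA]; omega
  refine ⟨?_, _, Set.smul_mem_smul_set (smul_adjMatrix_mem_Gset (completeBipartiteOn A) hw), ?_⟩
  · rintro _ ⟨g, hg, rfl⟩ v
    rw [smul_mulVec, dotProduct_smul, smul_eq_mul]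
    calc φ * (v ⬝ᵥ (g *ᵥ v))
        ≤ φ * (-(w * √(((n / 2 : ℕ) : ℝ) * (((n + 1) / 2 : ℕ) : ℝ))) * (v ⬝ᵥ v)) :=
          mul_le_mul_of_nonpos_left (neg_mul_dotProduct_self_le_of_mem_Gset hg hw v) hφ.le
      _ = _ := by ring
  · have hne : A.Nonempty := by rw [← card_pos, hA]; omega
    have hcne : Aᶜ.Nonempty := by rw [← card_pos, hAc]; omega
    convert ((hasEigen_adjMatrix_completeBipartiteOn hne hcne).smul w).smul φ using 1
    rw [hA, hAc]
    ring

end ExtremalNetworks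

section Assumption

variable {n : ℕ} {w φ : ℝ}

lemma sub_one_mul_mul_lt_one (hn : 2 ≤ n) (hφ : 0 < φ) (h : w < 1 / (φ * ((n : ℝ) - 1))) :
    ((n : ℝ) - 1) * φ * w < 1 := by
  have hn' : (1 : ℝ) < n := by exact_mod_cast hn
  rw [lt_div_iff₀ (mul_pos hφ (by linarith))] at h
  linarith

lemma neg_mul_mul_sqrt_lt_one (hn : 2 ≤ n) (hφ : φ < 0) (hEven : Even n → w < -2 / (φ * n))
    (hOdd : Odd n → w < -2 / (φ * √((n : ℝ) ^ 2 - 1))) :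
    -(φ * w * √(((n / 2 : ℕ) : ℝ) * (((n + 1) / 2 : ℕ) : ℝ))) < 1 := by
  set s := √(((n / 2 : ℕ) : ℝ) * (((n + 1) / 2 : ℕ) : ℝ)) with hs_def
  have hs : 0 < s :=
    Real.sqrt_pos.2 (mul_pos (Nat.cast_pos.2 (by omega)) (Nat.cast_pos.2 (by omega)))
  have h : w < -2 / (φ * (2 * s)) := by
    obtain ⟨m, rfl | rfl⟩ := Nat.even_or_odd' n
    · convert hEven (even_two_mul m) using 3
      rw [hs_def, show 2 * m / 2 = m by omega, show (2 * m + 1) / 2 = m by omega,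
        Real.sqrt_mul_self (Nat.cast_nonneg _)]
      push_cast
      ring
    · convert hOdd (odd_two_mul_add_one m) using 3
      rw [hs_def, show (2 * m + 1) / 2 = m by omega, show (2 * m + 1 + 1) / 2 = m + 1 by omega,
        show ((2 * m + 1 : ℕ) : ℝ) ^ 2 - 1 = 2 ^ 2 * (m * (m + 1 : ℕ)) by push_cast; ring,
        Real.sqrt_mul (by norm_num : (0 : ℝ) ≤ 2 ^ 2), Real.sqrt_sq (by norm_num)]
  rw [lt_div_iff_of_neg (mul_neg_of_neg_of_pos hφ (by positivity))] at h
  linarith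

end Assumption

/-- Theorem 3: joint intervention dominates single intervention, `V*_joint ≥ V*_single`,
and the asymptotic welfare ratio is `((1 − φλ₁(ĝ))/(1 − (n−1)φw̄))²` for `φ > 0` and
`((1 − φλₙ(ĝ))/(1 + φw̄√(⌊n/2⌋⌈n/2⌉)))²` for `φ < 0`. -/
theorem stmt19 (n : ℕ) (hn : 2 ≤ n) (w φ κ : ℝ) (hw : 0 < w) (hφ : φ ≠ 0) (hκ : 0 < κ)
    (hpos : 0 < φ → w < 1 / (φ * ((n : ℝ) - 1)))
    (hnegEven : φ < 0 → Even n → w < -2 / (φ * (n : ℝ)))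
    (hnegOdd : φ < 0 → Odd n → w < -2 / (φ * Real.sqrt ((n : ℝ) ^ 2 - 1)))
    (ghat : Matrix (Fin n) (Fin n) ℝ) (hghat : ghat ∈ Gset n w) (ahat : Fin n → ℝ)
    (lam1 lamn : ℝ)
    (hlam1 : hasEigen ghat lam1) (hmax : ∀ μ : ℝ, hasEigen ghat μ → μ ≤ lam1)
    (hlamn : hasEigen ghat lamn) (hmin : ∀ μ : ℝ, hasEigen ghat μ → lamn ≤ μ) :
    let Vsingle : ℝ → ℝ := fun C =>
      sSup {v : ℝ | ∃ a : Fin n → ℝ, (∑ i, (a i - ahat i) ^ 2) ≤ C ∧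
        v = a ⬝ᵥ (((1 - φ • ghat)⁻¹ ^ 2).mulVec a)}
    let Vjoint : ℝ → ℝ := fun C =>
      sSup {v : ℝ | ∃ (a : Fin n → ℝ) (g : Matrix (Fin n) (Fin n) ℝ),
        g ∈ Gset n w ∧
        κ * (∑ i, ∑ j, (g i j - ghat i j) ^ 2) + (∑ i, (a i - ahat i) ^ 2) ≤ C ∧
        v = a ⬝ᵥ (((1 - φ • g)⁻¹ ^ 2).mulVec a)}
    (∀ C : ℝ, 0 ≤ C → Vsingle C ≤ Vjoint C) ∧
    (0 < φ →
      Filter.Tendsto (fun C : ℝ => Vjoint C / Vsingle C) Filter.atTop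
        (nhds (((1 - φ * lam1) / (1 - ((n : ℝ) - 1) * φ * w)) ^ 2))) ∧
    (φ < 0 →
      Filter.Tendsto (fun C : ℝ => Vjoint C / Vsingle C) Filter.atTop
        (nhds (((1 - φ * lamn) /
          (1 + φ * w * Real.sqrt (((n / 2 : ℕ) : ℝ) * (((n + 1) / 2 : ℕ) : ℝ)))) ^ 2))) := by
  intro Vsingle Vjoint
  have hsymm : ∀ g ∈ Gset n w, g.IsSymm := fun g hg => hg.1
  have hcost : ∀ g ∈ Gset n w, 0 ≤ κ * ∑ i, ∑ j, (g i j - ghat i j) ^ 2 :=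
    fun g _ => by positivity
  rcases hφ.lt_or_gt with hneg | hpos'
  · obtain ⟨hle, hlim⟩ := tendsto_jointValue_div_singleValue (ahat := ahat) hsymm
      (neg_mul_mul_sqrt_lt_one hn hneg (hnegEven hneg) (hnegOdd hneg))
      (isMaxEigenvalueOn_smul_Gset_of_neg hneg hn hw.le) hcost hghat (by simp)
      (isMaxEigenvalueOn_smul_singleton hghat.1 hφ hlamn
        fun μ hμ => mul_le_mul_of_nonpos_left (hmin μ hμ) hneg.le)
    rw [sub_neg_eq_add] at hlim
    exact ⟨hle, fun h => absurd h hneg.not_gt, fun _ => hlim⟩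
  · obtain ⟨hle, hlim⟩ := tendsto_jointValue_div_singleValue (ahat := ahat) hsymm
      (sub_one_mul_mul_lt_one hn hpos' (hpos hpos'))
      (isMaxEigenvalueOn_smul_Gset_of_pos hpos' (by omega) hw.le) hcost hghat (by simp)
      (isMaxEigenvalueOn_smul_singleton hghat.1 hφ hlam1
        fun μ hμ => mul_le_mul_of_nonneg_left (hmax μ hμ) hpos'.le)
    exact ⟨hle, fun _ => hlim, fun h => absurd h hpos'.not_gt⟩
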